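/- Let (X,d) be a metric space, A, B ⊆ X with B approximately compact with respect to A, T : A → B, and (u_n) a sequence in A with u_n → u ∈ A and d(u_{n+1}, T u_n) = d(A,B) for all n. Then there is a subsequence (T u_{n_k}) converging to some v ∈ B with d(u, v) = d(A,B); in particular u ∈ A₀. -/

import Mathlib

open Filter Topology Set

variable {X : Type*} [MetricSpace X]

/-- Distance between two sets. -/
noncomputable def setDist (A B : Set X) : ℝ :=
  sInf (Set.image2 dist A B)

/-- `A₀ = { a ∈ A : ∃ b ∈ B, d(a,b) = d(A,B) }`. -/
def proxA (A B : Set X) : Set X := {a ∈ A | ∃ b ∈ B, dist a b = setDist A B}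

/-- `B₀ = { b ∈ B : ∃ a ∈ A, d(a,b) = d(A,B) }`. -/
def proxB (A B : Set X) : Set X := {b ∈ B | ∃ a ∈ A, dist a b = setDist A B}

/-- `B` is approximately compact with respect to `A` (limits of the
subsequences lie in `B`). -/
def ApproxCompactWRT (B A : Set X) : Prop :=
  ∀ y ∈ A, ∀ x : ℕ → X, (∀ n, x n ∈ B) →
    Tendsto (fun n => dist y (x n)) atTop (𝓝 (Metric.infDist y B)) →
    ∃ z ∈ B, ∃ k : ℕ → ℕ, StrictMono k ∧ Tendsto (x ∘ k) atTop (𝓝 z)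

/-! The reverse triangle inequality gives `|d(p, Tuₙ) - d(uₙ₊₁, Tuₙ)| ≤ d(p, uₙ₊₁) → 0`, so
`d(p, Tuₙ) → d(A,B)`. Since `d(A,B) ≤ d(p,B) ≤ d(p, Tuₙ)`, this limit is `d(p,B)`, and approximate
compactness yields a convergent subsequence of `Tuₙ`, whose limit is at distance `d(A,B)` from `p`. -/

theorem setDist_le_dist {A B : Set X} {a b : X} (ha : a ∈ A) (hb : b ∈ B) :
    setDist A B ≤ dist a b :=
  csInf_le ⟨0, by rintro _ ⟨_, _, _, _, rfl⟩; exact dist_nonneg⟩ ⟨a, ha, b, hb, rfl⟩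

theorem infDist_eq_setDist_of_tendsto {A B : Set X} {y : X} {w : ℕ → X} (hy : y ∈ A)
    (hw : ∀ n, w n ∈ B) (h : Tendsto (fun n => dist y (w n)) atTop (𝓝 (setDist A B))) :
    Metric.infDist y B = setDist A B := by
  refine le_antisymm ?_ ?_
  · exact ge_of_tendsto' h fun n => Metric.infDist_le_dist_of_mem (hw n)
  · exact (Metric.le_infDist ⟨w 0, hw 0⟩).2 fun b hb => setDist_le_dist hy hb

theorem tendsto_dist_of_tendsto_dist {ι : Type*} {l : Filter ι} {u w : ι → X} {p : X} {c : ℝ}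
    (hu : Tendsto u l (𝓝 p)) (h : Tendsto (fun i => dist (u i) (w i)) l (𝓝 c)) :
    Tendsto (fun i => dist p (w i)) l (𝓝 c) :=
  h.congr_dist <| squeeze_zero (fun _ => dist_nonneg)
    (fun i => dist_dist_dist_le_left (u i) p (w i)) (tendsto_iff_dist_tendsto_zero.1 hu)

theorem limit_in_proxA_general (A B : Set X)
    (hAC : ApproxCompactWRT B A)
    (T : X → X) (hT : ∀ x ∈ A, T x ∈ B)
    (u : ℕ → X) (huA : ∀ n, u n ∈ A) (p : X) (hp : p ∈ A)
    (hlim : Tendsto u atTop (𝓝 p))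
    (hrec : ∀ n, dist (u (n + 1)) (T (u n)) = setDist A B) :
    (∃ v ∈ B, ∃ k : ℕ → ℕ, StrictMono k ∧
      Tendsto (fun i => T (u (k i))) atTop (𝓝 v) ∧ dist p v = setDist A B) ∧
    p ∈ proxA A B := by
  have hTB : ∀ n, T (u n) ∈ B := fun n => hT _ (huA n)
  have hdist : Tendsto (fun n => dist p (T (u n))) atTop (𝓝 (setDist A B)) :=
    tendsto_dist_of_tendsto_dist (hlim.comp (tendsto_add_atTop_nat 1))
      (by simp only [Function.comp_apply, hrec]; exact tendsto_const_nhds)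
  have hinf : Metric.infDist p B = setDist A B := infDist_eq_setDist_of_tendsto hp hTB hdist
  obtain ⟨v, hv, k, hk, hvk⟩ := hAC p hp _ hTB (hinf ▸ hdist)
  have hpv : dist p v = setDist A B :=
    tendsto_nhds_unique (tendsto_const_nhds.dist hvk) (hdist.comp hk.tendsto_atTop)
  exact ⟨⟨v, hv, k, hk, hvk, hpv⟩, hp, v, hv, hpv⟩

theorem limit_in_proxA (A B : Set X) (hA : A.Nonempty) (hB : B.Nonempty)
    (hAC : ApproxCompactWRT B A)
    (T : X → X) (hT : ∀ x ∈ A, T x ∈ B)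
    (u : ℕ → X) (huA : ∀ n, u n ∈ A) (p : X) (hp : p ∈ A)
    (hlim : Tendsto u atTop (𝓝 p))
    (hrec : ∀ n, dist (u (n + 1)) (T (u n)) = setDist A B) :
    (∃ v ∈ B, ∃ k : ℕ → ℕ, StrictMono k ∧
      Tendsto (fun i => T (u (k i))) atTop (𝓝 v) ∧ dist p v = setDist A B) ∧
    p ∈ proxA A B :=
  limit_in_proxA_general A B hAC T hT u huA p hp hlim hrec
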